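/- For every nonnegative integer n, ∫_{-1}^{1} P_n(x) Q_n(x) dx = 0. -/

import Mathlib

open Filter MeasureTheory Real

/-- The `n`-th Legendre polynomial, via the Rodrigues formula. -/
noncomputable def legendrePoly (n : ℕ) : Polynomial ℝ :=
  Polynomial.C (1 / (2 ^ n * (Nat.factorial n : ℝ))) *
    (Polynomial.derivative)^[n] ((Polynomial.X ^ 2 - 1) ^ n)

/-- Cauchy principal value of `∫_{-1}^1 f ξ dξ` with a singularity at `x`. -/
noncomputable def pvInt (f : ℝ → ℝ) (x : ℝ) : ℝ :=
  limUnder (nhdsWithin (0 : ℝ) (Set.Ioi 0))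
    (fun ε : ℝ => (∫ ξ in (-1 : ℝ)..(x - ε), f ξ) + ∫ ξ in (x + ε)..(1 : ℝ), f ξ)

/-- Legendre function of the second kind of degree `n` on `(-1, 1)`,
via the Neumann integral representation. -/
noncomputable def legendreQ (n : ℕ) (x : ℝ) : ℝ :=
  pvInt (fun ξ => (legendrePoly n).eval ξ / (2 * (x - ξ))) x


/-!
`P_n` has parity `(-1)^n`, so the substitution `ξ ↦ -ξ` in the Neumann integral gives
`Q_n(-x) = (-1)^(n+1) Q_n(x)` on `(-1, 1)`; hence `P_n Q_n` is odd and integrates to zero over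
`[-1, 1]`. Pulling the sign out of the principal value needs the limit to exist (`limUnder` of a
divergent family is an arbitrary junk value). It does: writing `p(ξ) = p(x) + (ξ - x) r(ξ)`,
every truncated integral of `1 / (x - ξ)` equals `log ((1 + x) / (1 - x))`, and those of the
polynomial `r` converge.
-/

open Polynomial Set intervalIntegral
open scoped Topology Interval

namespace Polynomial

theorem iterate_derivative_comp_neg_X {R : Type*} [CommRing R] (p : R[X]) (k : ℕ) :
    derivative^[k] (p.comp (-X)) = (-1) ^ k * (derivative^[k] p).comp (-X) := by
  induction k generalizing p with
  | zero => simp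
  | succ k ih => simp [ih (derivative p), derivative_comp, pow_succ]

theorem iterate_derivative_comp_neg_X_of_even {R : Type*} [CommRing R] {p : R[X]}
    (hp : p.comp (-X) = p) (k : ℕ) :
    (derivative^[k] p).comp (-X) = (-1) ^ k * derivative^[k] p := by
  conv_rhs => rw [← hp, iterate_derivative_comp_neg_X, ← mul_assoc, ← mul_pow]
  simp

end Polynomial

theorem intervalIntegral.integral_eq_zero_of_odd_on_Ioo {g : ℝ → ℝ} {a : ℝ} (ha : 0 ≤ a)
    (hg : ∀ x ∈ Ioo (-a) a, g (-x) = -g x) : ∫ x in -a..a, g x = 0 := by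
  have hodd : ∫ x in -a..a, g (-x) = ∫ x in -a..a, -g x := by
    refine integral_congr_ae ?_
    filter_upwards [volume.ae_ne a] with x hxa hx
    rw [uIoc_of_le (by linarith)] at hx
    exact hg x ⟨hx.1, lt_of_le_of_ne hx.2 hxa⟩
  have hsymm := integral_comp_neg (a := -a) (b := a) g
  rw [neg_neg, hodd, integral_neg] at hsymm
  linarith

noncomputable def pvTrunc (f : ℝ → ℝ) (x ε : ℝ) : ℝ :=
  (∫ ξ in (-1 : ℝ)..(x - ε), f ξ) + ∫ ξ in (x + ε)..(1 : ℝ), f ξ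

section PrincipalValue

variable {f g : ℝ → ℝ} {x ε : ℝ}

theorem pvInt_eq_of_tendsto {L : ℝ} (h : Tendsto (pvTrunc f x) (𝓝[>] 0) (𝓝 L)) :
    pvInt f x = L :=
  h.limUnder_eq

theorem pvTrunc_comp_neg (f : ℝ → ℝ) (x ε : ℝ) :
    pvTrunc (fun ξ => f (-ξ)) (-x) ε = pvTrunc f x ε := by
  rw [pvTrunc, pvTrunc, integral_comp_neg, integral_comp_neg, add_comm]
  congr 2 <;> ring

theorem pvInt_comp_neg (f : ℝ → ℝ) (x : ℝ) : pvInt (fun ξ => f (-ξ)) (-x) = pvInt f x :=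
  congrArg (limUnder _) (funext (pvTrunc_comp_neg f x))

theorem pvTrunc_const_mul (c : ℝ) (f : ℝ → ℝ) (x ε : ℝ) :
    pvTrunc (fun ξ => c * f ξ) x ε = c * pvTrunc f x ε := by
  simp only [pvTrunc, intervalIntegral.integral_const_mul, mul_add]

theorem pvInt_const_mul {L : ℝ} (h : Tendsto (pvTrunc f x) (𝓝[>] 0) (𝓝 L)) (c : ℝ) :
    pvInt (fun ξ => c * f ξ) x = c * pvInt f x := by
  rw [pvInt_eq_of_tendsto h]
  exact pvInt_eq_of_tendsto <| (h.const_mul c).congr fun ε => (pvTrunc_const_mul c f x ε).symm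

theorem pvTrunc_add (hf₁ : IntervalIntegrable f volume (-1) (x - ε))
    (hf₂ : IntervalIntegrable f volume (x + ε) 1) (hg₁ : IntervalIntegrable g volume (-1) (x - ε))
    (hg₂ : IntervalIntegrable g volume (x + ε) 1) :
    pvTrunc (fun ξ => f ξ + g ξ) x ε = pvTrunc f x ε + pvTrunc g x ε := by
  simp only [pvTrunc, integral_add hf₁ hg₁, integral_add hf₂ hg₂]
  ring

theorem pvTrunc_congr (h : ∀ ξ, ξ ≠ x → f ξ = g ξ) (ε : ℝ) : pvTrunc f x ε = pvTrunc g x ε := by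
  unfold pvTrunc
  congr 1 <;>
  · refine integral_congr_ae ?_
    filter_upwards [volume.ae_ne x] with ξ hξ _ using h ξ hξ

theorem tendsto_pvTrunc_of_continuous (hf : Continuous f) (x : ℝ) :
    Tendsto (pvTrunc f x) (𝓝 0) (𝓝 (∫ ξ in (-1 : ℝ)..1, f ξ)) := by
  set F : ℝ → ℝ := fun b => ∫ ξ in (-1 : ℝ)..b, f ξ
  have hF : Continuous F := continuous_primitive (fun a b => hf.intervalIntegrable a b) (-1)
  have hrepr : pvTrunc f x = fun ε => F (x - ε) + (F 1 - F (x + ε)) := by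
    funext ε
    rw [pvTrunc, integral_interval_sub_left (hf.intervalIntegrable _ _) (hf.intervalIntegrable _ _)]
  have hcont : Continuous (pvTrunc f x) := by
    rw [hrepr]
    exact (hF.comp (continuous_const.sub continuous_id)).add
      (continuous_const.sub (hF.comp (continuous_const.add continuous_id)))
  simpa [hrepr] using hcont.tendsto 0

theorem intervalIntegrable_inv_sub {a b : ℝ} (hx : x ∉ [[a, b]]) :
    IntervalIntegrable (fun ξ => (x - ξ)⁻¹) volume a b :=
  intervalIntegrable_inv (fun ξ hξ => sub_ne_zero.mpr fun h => hx (h ▸ hξ)) (by fun_prop)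

theorem pvTrunc_inv_sub (hx : x ∈ Ioo (-1) 1) (hε : 0 < ε) :
    pvTrunc (fun ξ => (x - ξ)⁻¹) x ε = log ((1 + x) / (1 - x)) := by
  obtain ⟨hx₁, hx₂⟩ := hx
  have hleft : ∫ ξ in (-1 : ℝ)..(x - ε), (x - ξ)⁻¹ = log ((x + 1) / ε) := by
    rw [integral_comp_sub_left (fun u => u⁻¹), sub_sub_cancel, sub_neg_eq_add,
      integral_inv (notMem_uIcc_of_lt hε (by linarith))]
  have hright : ∫ ξ in (x + ε)..(1 : ℝ), (x - ξ)⁻¹ = log (ε / (1 - x)) := by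
    rw [integral_comp_sub_left (fun u => u⁻¹), sub_add_cancel_left,
      integral_inv (notMem_uIcc_of_gt (by linarith) (by linarith)), ← neg_sub 1 x,
      neg_div_neg_eq]
  rw [pvTrunc, hleft, hright,
    ← log_mul (div_pos (by linarith) hε).ne' (div_pos hε (by linarith)).ne']
  congr 1
  field_simp
  ring

theorem tendsto_pvTrunc_const_mul_inv_sub_add {r : ℝ → ℝ} (hr : Continuous r)
    (hx : x ∈ Ioo (-1) 1) (c : ℝ) :
    Tendsto (pvTrunc (fun ξ => c * (x - ξ)⁻¹ + r ξ) x) (𝓝[>] 0)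
      (𝓝 (c * log ((1 + x) / (1 - x)) + ∫ ξ in (-1 : ℝ)..1, r ξ)) := by
  refine (tendsto_const_nhds.add ((tendsto_pvTrunc_of_continuous hr x).mono_left
    nhdsWithin_le_nhds)).congr' ?_
  filter_upwards [self_mem_nhdsWithin] with ε (hε : 0 < ε)
  have hkernel {a b : ℝ} (h : x ∉ [[a, b]]) :
      IntervalIntegrable (fun ξ => c * (x - ξ)⁻¹) volume a b :=
    (intervalIntegrable_inv_sub h).const_mul c
  rw [pvTrunc_add (hkernel (notMem_uIcc_of_gt (by linarith [hx.1]) (by linarith)))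
    (hkernel (notMem_uIcc_of_lt (by linarith) (by linarith [hx.2])))
    (hr.intervalIntegrable _ _) (hr.intervalIntegrable _ _), pvTrunc_const_mul,
    pvTrunc_inv_sub hx hε]

end PrincipalValue

theorem Polynomial.exists_tendsto_pvTrunc_eval_div (p : ℝ[X]) {x : ℝ} (hx : x ∈ Ioo (-1) 1) :
    ∃ L, Tendsto (pvTrunc (fun ξ => p.eval ξ / (2 * (x - ξ))) x) (𝓝[>] 0) (𝓝 L) := by
  obtain ⟨r, hr⟩ := (X_sub_C_dvd_sub_C_eval : X - C x ∣ p - C (p.eval x))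
  have hsplit (ξ : ℝ) (hξ : ξ ≠ x) :
      p.eval ξ / (2 * (x - ξ)) = p.eval x / 2 * (x - ξ)⁻¹ + -r.eval ξ / 2 := by
    have hev : p.eval ξ = p.eval x + (ξ - x) * r.eval ξ := by
      linear_combination (by simpa using congrArg (eval ξ) hr :
        p.eval ξ - p.eval x = (ξ - x) * r.eval ξ)
    have hne : x - ξ ≠ 0 := sub_ne_zero.mpr hξ.symm
    rw [hev]
    field_simp
    ring
  exact ⟨_, (tendsto_pvTrunc_const_mul_inv_sub_add (by fun_prop) hx _).congr
    fun ε => (pvTrunc_congr hsplit ε).symm⟩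

theorem legendrePoly_comp_neg_X (n : ℕ) :
    (legendrePoly n).comp (-X) = (-1) ^ n * legendrePoly n := by
  have heven : (((X : ℝ[X]) ^ 2 - 1) ^ n).comp (-X) = (X ^ 2 - 1) ^ n := by simp
  rw [legendrePoly, mul_comp, C_comp, iterate_derivative_comp_neg_X_of_even heven]
  ring

theorem legendrePoly_eval_neg (n : ℕ) (y : ℝ) :
    (legendrePoly n).eval (-y) = (-1) ^ n * (legendrePoly n).eval y := by
  simpa using congrArg (eval y) (legendrePoly_comp_neg_X n)

theorem legendreQ_neg (n : ℕ) {x : ℝ} (hx : x ∈ Ioo (-1) 1) :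
    legendreQ n (-x) = (-1) ^ (n + 1) * legendreQ n x := by
  obtain ⟨L, hL⟩ := (legendrePoly n).exists_tendsto_pvTrunc_eval_div hx
  have hsign : ((-1 : ℝ) ^ (n + n)) = 1 := Even.neg_one_pow ⟨n, rfl⟩
  have hkernel : (fun ξ => (legendrePoly n).eval ξ / (2 * (-x - ξ))) =
      fun ξ => (-1) ^ (n + 1) * ((legendrePoly n).eval (-ξ) / (2 * (x - -ξ))) := by
    funext ξ
    rw [legendrePoly_eval_neg, show 2 * (-x - ξ) = -(2 * (x - -ξ)) by ring, div_neg]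
    linear_combination (legendrePoly n).eval ξ / (2 * (x - -ξ)) * hsign
  rw [legendreQ, hkernel,
    pvInt_comp_neg (fun u => (-1) ^ (n + 1) * ((legendrePoly n).eval u / (2 * (x - u)))),
    pvInt_const_mul hL, legendreQ]

theorem int_PQ_vanishes (n : ℕ) :
    ∫ x in (-1 : ℝ)..1, (legendrePoly n).eval x * legendreQ n x = 0 := by
  refine integral_eq_zero_of_odd_on_Ioo zero_le_one fun x hx => ?_
  have hsign : ((-1 : ℝ) ^ (n + n)) = 1 := Even.neg_one_pow ⟨n, rfl⟩
  rw [legendrePoly_eval_neg, legendreQ_neg n hx]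
  linear_combination (-(legendrePoly n).eval x * legendreQ n x) * hsign
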